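/- Let k be a field, R = k[x,y,z] with 𝔪 = (x,y,z), let d ≥ 2 and d' ≥ 2 be integers, and let I' ⊆ R be the ideal generated by the monomials z^{d'}·x^{i·d'}·y^{(d−1−i)·d'} for 0 ≤ i ≤ d−1, x^{(2+j)·d'}·y^{(d−2−j)·d'} for 0 ≤ j ≤ d−2, y^{d·d'}, and z^{d·d'} (the images under x ↦ x^{d'}, y ↦ y^{d'}, z ↦ z^{d'} of the generators z·x^i·y^{d−1−i}, x^{2+j}·y^{d−2−j}, y^d, z^d). Then I' is 𝔪-primary, and for every integer t ≥ 0 one has dim_k Soc(R/I')_t = (d−2)·[t = dd'+2d'−3] + 1·[t = dd'+3d'−3] + (d−1)·[t = 2dd'−3], where [·] equals 1 if the condition holds and 0 otherwise and the contributions are added when the listed degrees coincide. -/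

import Mathlib

/-!
`I'` is the monomial ideal whose exponents are `d'` times those of
`I = (z(x,y)^{d-1}, x²(x,y)^{d-2}, y^d, z^d)`, so `x^a y^b z^c ∈ I'` iff
`x^⌊a/d'⌋ y^⌊b/d'⌋ z^⌊c/d'⌋ ∈ I`. Consequently the socle monomials of `R/I'` are exactly
`(x^A y^B z^C)^{d'} (xyz)^{d'-1}`, of degree `d'(A+B+C+3) - 3`, for the socle monomials
`x^A y^B z^C` of `R/I`; these are `x^a y^{d-2-a} z^{d-1}`, `x y^{d-1}` and `x^{j+2} y^{d-3-j}`.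
For a monomial ideal, the socle of the quotient is spanned by the images of its socle monomials,
which are linearly independent, so `dim_k Soc(R/I')_t` counts the socle monomials of degree `t`.
-/

open MvPolynomial

/-- The maximal graded ideal `𝔪 = (x, y, z)` of `k[x,y,z]`. -/
noncomputable def mIdeal (k : Type*) [Field k] : Ideal (MvPolynomial (Fin 3) k) :=
  Ideal.span (Set.range (X : Fin 3 → MvPolynomial (Fin 3) k))

/-- `dim_k Soc(R/I)_t`, the dimension of the degree-`t` component of the socle
`(I : 𝔪)/I` of `R/I`. -/
noncomputable def socDimAt {k : Type*} [Field k] (I : Ideal (MvPolynomial (Fin 3) k))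
    (t : ℕ) : ℕ :=
  Module.finrank k
    ↥(Submodule.map (Ideal.Quotient.mkₐ k I).toLinearMap
      ((Submodule.colon I (mIdeal k)).restrictScalars k ⊓ homogeneousSubmodule (Fin 3) k t))

section MonomialIdeal

variable {σ : Type*} (k : Type*) [Field k]

noncomputable def monomialIdeal (S : Set (σ →₀ ℕ)) : Ideal (MvPolynomial σ k) :=
  Ideal.span ((fun s => monomial s 1) '' S)

variable {k}

theorem mem_monomialIdeal_iff {S : Set (σ →₀ ℕ)} {p : MvPolynomial σ k} :
    p ∈ monomialIdeal k S ↔ ∀ s ∈ p.support, s ∈ upperClosure S := by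
  simp only [monomialIdeal, mem_ideal_span_monomial_image, mem_upperClosure]

theorem monomial_mem_monomialIdeal {S : Set (σ →₀ ℕ)} {s : σ →₀ ℕ} (hs : s ∈ upperClosure S)
    (c : k) : monomial s c ∈ monomialIdeal k S :=
  mem_monomialIdeal_iff.2 fun _ hu => Finset.mem_singleton.1 (support_monomial_subset hu) ▸ hs

def IsSocleExponent (S : Set (σ →₀ ℕ)) (s : σ →₀ ℕ) : Prop :=
  s ∉ upperClosure S ∧ ∀ i, s + Finsupp.single i 1 ∈ upperClosure S

theorem linearIndependent_mk_monomial {S B : Set (σ →₀ ℕ)} (hB : Disjoint B (upperClosure S)) :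
    LinearIndependent k
      fun s : B => Ideal.Quotient.mk (monomialIdeal k S) (monomial s.1 (1 : k)) := by
  have hmono : LinearIndependent k fun s : B => (monomial s.1 (1 : k)) :=
    (basisMonomials σ k).linearIndependent.comp _ Subtype.val_injective
  refine hmono.map (f := (Ideal.Quotient.mkₐ k (monomialIdeal k S)).toLinearMap) ?_
  rw [Submodule.disjoint_def]
  intro p hpB hpI
  rw [← Set.image_eq_range (fun s => monomial s (1 : k)), ← restrictSupport_eq_span,
    mem_restrictSupport_iff] at hpB
  have hpI : p ∈ monomialIdeal k S := Ideal.Quotient.eq_zero_iff_mem.1 hpI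
  rw [← support_eq_empty, Finset.eq_empty_iff_forall_notMem]
  exact fun s hs => hB.notMem_of_mem_left (hpB hs) (mem_monomialIdeal_iff.1 hpI s hs)

theorem mul_X_mem_monomialIdeal_iff {S : Set (σ →₀ ℕ)} {p : MvPolynomial σ k} {i : σ} :
    p * X i ∈ monomialIdeal k S ↔ ∀ s ∈ p.support, s + Finsupp.single i 1 ∈ upperClosure S := by
  simp only [mem_monomialIdeal_iff, support_mul_X, Finset.forall_mem_map, addRightEmbedding_apply]

end MonomialIdeal

theorem mem_colon_mIdeal_iff {k : Type*} [Field k] {I : Ideal (MvPolynomial (Fin 3) k)}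
    {p : MvPolynomial (Fin 3) k} : p ∈ Submodule.colon I (mIdeal k) ↔ ∀ i, p * X i ∈ I := by
  simp only [mIdeal, Ideal.colon_span, Submodule.mem_colon, Set.forall_mem_range, smul_eq_mul]

theorem map_colon_inf_homogeneousSubmodule {k : Type*} [Field k] (S : Set (Fin 3 →₀ ℕ)) (t : ℕ) :
    Submodule.map (Ideal.Quotient.mkₐ k (monomialIdeal k S)).toLinearMap
        ((Submodule.colon (monomialIdeal k S) (mIdeal k)).restrictScalars k ⊓
          homogeneousSubmodule (Fin 3) k t) =
      Submodule.span k ((fun s => Ideal.Quotient.mk (monomialIdeal k S) (monomial s 1)) ''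
        {s | IsSocleExponent S s ∧ s.degree = t}) := by
  set f := (Ideal.Quotient.mkₐ k (monomialIdeal k S)).toLinearMap
  apply le_antisymm
  · rintro _ ⟨p, ⟨hpI, hpt⟩, rfl⟩
    rw [SetLike.mem_coe, Submodule.restrictScalars_mem, mem_colon_mIdeal_iff] at hpI
    rw [SetLike.mem_coe, mem_homogeneousSubmodule] at hpt
    rw [p.as_sum, map_sum]
    refine Submodule.sum_mem _ fun s hs => ?_
    by_cases hsS : s ∈ upperClosure S
    · rw [show f (monomial s (coeff s p)) = 0 from
        Ideal.Quotient.eq_zero_iff_mem.2 (monomial_mem_monomialIdeal hsS _)]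
      exact Submodule.zero_mem _
    · rw [← mul_one (coeff s p), ← smul_eq_mul, ← smul_monomial, map_smul]
      refine Submodule.smul_mem _ _ (Submodule.subset_span ⟨s, ⟨⟨hsS, fun i => ?_⟩, ?_⟩, rfl⟩)
      · exact mul_X_mem_monomialIdeal_iff.1 (hpI i) s hs
      · exact (hpt.degree_eq_sum_deg_support hs).symm
  · rw [Submodule.span_le]
    rintro _ ⟨s, ⟨hsoc, hst⟩, rfl⟩
    refine ⟨monomial s 1, ⟨?_, isHomogeneous_monomial _ hst⟩, rfl⟩
    rw [SetLike.mem_coe, Submodule.restrictScalars_mem, mem_colon_mIdeal_iff]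
    exact fun i => mul_X_mem_monomialIdeal_iff.2 fun u hu =>
      Finset.mem_singleton.1 (support_monomial_subset hu) ▸ hsoc.2 i

theorem socDimAt_monomialIdeal {k : Type*} [Field k] (S : Set (Fin 3 →₀ ℕ)) (t : ℕ)
    (B : Finset (Fin 3 →₀ ℕ)) (hB : ∀ s, s ∈ B ↔ IsSocleExponent S s ∧ s.degree = t) :
    socDimAt (monomialIdeal k S) t = B.card := by
  have hBset : {s | IsSocleExponent S s ∧ s.degree = t} = ↑B := by ext s; simp [hB]
  have hli := linearIndependent_mk_monomial (k := k) (B := ↑B)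
    (Set.disjoint_left.2 fun s hs => ((hB s).1 hs).1.1)
  rw [socDimAt, map_colon_inf_homogeneousSubmodule, hBset, Set.image_eq_range,
    finrank_span_eq_card hli]
  exact Fintype.card_coe B

theorem mIdeal_pow_le_monomialIdeal {k : Type*} [Field k] {S : Set (Fin 3 →₀ ℕ)} {N : ℕ}
    (h : ∀ s, N ≤ s.degree → s ∈ upperClosure S) : mIdeal k ^ N ≤ monomialIdeal k S :=
  fun p hp => mem_monomialIdeal_iff.2 fun s hs => h s ((mem_pow_idealOfVars_iff N p).1 hp s hs)

noncomputable def expo (a b c : ℕ) : Fin 3 →₀ ℕ :=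
  Finsupp.single 0 a + Finsupp.single 1 b + Finsupp.single 2 c

@[simp] theorem expo_apply_zero (a b c : ℕ) : expo a b c 0 = a := by simp [expo]
@[simp] theorem expo_apply_one (a b c : ℕ) : expo a b c 1 = b := by simp [expo]
@[simp] theorem expo_apply_two (a b c : ℕ) : expo a b c 2 = c := by simp [expo]

theorem expo_le_iff {a b c : ℕ} {s : Fin 3 →₀ ℕ} :
    expo a b c ≤ s ↔ a ≤ s 0 ∧ b ≤ s 1 ∧ c ≤ s 2 := by
  simp [Finsupp.le_def, Fin.forall_fin_succ]

theorem expo_eq_iff {a b c : ℕ} {s : Fin 3 →₀ ℕ} :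
    s = expo a b c ↔ s 0 = a ∧ s 1 = b ∧ s 2 = c := by
  simp [Finsupp.ext_iff, Fin.forall_fin_succ]

theorem degree_expo (a b c : ℕ) : (expo a b c).degree = a + b + c := by
  simp [Finsupp.degree_eq_sum, Fin.sum_univ_three]

theorem monomial_expo {k : Type*} [Field k] (a b c : ℕ) :
    monomial (expo a b c) (1 : k) = X 0 ^ a * X 1 ^ b * X 2 ^ c := by
  simp only [expo, X_pow_eq_monomial, monomial_mul, mul_one]

def gens (d d' : ℕ) : Set (Fin 3 →₀ ℕ) :=
  {s | ∃ i ≤ d - 1, s = expo (i * d') ((d - 1 - i) * d') d'} ∪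
  {s | ∃ j ≤ d - 2, s = expo ((2 + j) * d') ((d - 2 - j) * d') 0} ∪
  {expo 0 (d * d') 0, expo 0 0 (d * d')}

theorem span_eq_monomialIdeal_gens {k : Type*} [Field k] (d d' : ℕ) :
    Ideal.span
      ({p | ∃ i ≤ d - 1, p = X 2 ^ d' * X 0 ^ (i * d') * X 1 ^ ((d - 1 - i) * d')} ∪
       {p | ∃ j ≤ d - 2, p = X 0 ^ ((2 + j) * d') * X 1 ^ ((d - 2 - j) * d')} ∪
       {X 1 ^ (d * d'), X 2 ^ (d * d')}) = monomialIdeal k (gens d d') := by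
  rw [monomialIdeal, gens]
  simp only [Set.image_union, Set.image_insert_eq, Set.image_singleton, monomial_expo,
    pow_zero, one_mul, mul_one]
  congr 3 <;> ext p
  · constructor
    · rintro ⟨i, hi, rfl⟩
      exact ⟨_, ⟨i, hi, rfl⟩, by simp only [monomial_expo]; ring⟩
    · rintro ⟨_, ⟨i, hi, rfl⟩, rfl⟩
      exact ⟨i, hi, by simp only [monomial_expo]; ring⟩
  · constructor
    · rintro ⟨j, hj, rfl⟩
      exact ⟨_, ⟨j, hj, rfl⟩, by simp only [monomial_expo]; ring⟩
    · rintro ⟨_, ⟨j, hj, rfl⟩, rfl⟩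
      exact ⟨j, hj, by simp only [monomial_expo]; ring⟩

/-- `x^A y^B z^C ∈ (z(x,y)^{d-1}, x²(x,y)^{d-2}, y^d, z^d)`. -/
def InBaseStair (d A B C : ℕ) : Prop :=
  (1 ≤ C ∧ d ≤ A + B + 1) ∨ (2 ≤ A ∧ d ≤ A + B) ∨ d ≤ B ∨ d ≤ C

theorem mem_upperClosure_gens_iff {d d' : ℕ} (hd' : 0 < d') (s : Fin 3 →₀ ℕ) :
    s ∈ upperClosure (gens d d') ↔ InBaseStair d (s 0 / d') (s 1 / d') (s 2 / d') := by
  simp only [mem_upperClosure, gens, Set.mem_union, Set.mem_insert_iff, Set.mem_singleton_iff,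
    Set.mem_ofPred_eq]
  constructor
  · rintro ⟨_, ((⟨i, hi, rfl⟩ | ⟨j, hj, rfl⟩) | rfl | rfl), hle⟩ <;>
    simp only [expo_le_iff, ← Nat.le_div_iff_mul_le hd', ← Nat.one_le_div_iff hd'] at hle <;>
    unfold InBaseStair <;> omega
  · rintro (⟨hC, hAB⟩ | ⟨hA, hAB⟩ | hB | hC)
    · refine ⟨_, Or.inl (Or.inl ⟨min (s 0 / d') (d - 1), min_le_right _ _, rfl⟩), ?_⟩
      simp only [expo_le_iff, ← Nat.le_div_iff_mul_le hd', ← Nat.one_le_div_iff hd']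
      generalize s 0 / d' = A at *
      generalize s 1 / d' = B at *
      omega
    · refine ⟨_, Or.inl (Or.inr ⟨min (s 0 / d' - 2) (d - 2), min_le_right _ _, rfl⟩), ?_⟩
      simp only [expo_le_iff, ← Nat.le_div_iff_mul_le hd']
      generalize s 0 / d' = A at *
      generalize s 1 / d' = B at *
      omega
    · exact ⟨_, Or.inr (Or.inl rfl), by simp [expo_le_iff, ← Nat.le_div_iff_mul_le hd', hB]⟩
    · exact ⟨_, Or.inr (Or.inr rfl), by simp [expo_le_iff, ← Nat.le_div_iff_mul_le hd', hC]⟩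

theorem mem_upperClosure_gens_of_le_degree {d d' : ℕ} (hd : 2 ≤ d) (hd' : 0 < d')
    {s : Fin 3 →₀ ℕ} (hs : 3 * (d * d') ≤ s.degree) : s ∈ upperClosure (gens d d') := by
  rw [Finsupp.degree_eq_sum, Fin.sum_univ_three] at hs
  have hbig : d ≤ s 0 / d' ∨ d ≤ s 1 / d' ∨ d ≤ s 2 / d' := by
    simp only [Nat.le_div_iff_mul_le hd']
    omega
  rw [mem_upperClosure_gens_iff hd']
  generalize s 0 / d' = A at *
  generalize s 1 / d' = B at *
  generalize s 2 / d' = C at *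
  unfold InBaseStair
  omega

theorem Nat.eq_succ_mul_sub_one_of_succ_div_ne {n d' : ℕ} (h : (n + 1) / d' ≠ n / d') :
    (n + 1) / d' = n / d' + 1 ∧ n = (n / d' + 1) * d' - 1 := by
  rw [Nat.succ_div] at h ⊢
  split_ifs at h ⊢ with hdvd
  · exact ⟨rfl, by rw [← Nat.succ_div_of_dvd hdvd, Nat.div_mul_cancel hdvd, Nat.add_sub_cancel]⟩
  · exact absurd (add_zero _) h

theorem Nat.succ_mul_sub_one_div {d' : ℕ} (hd' : 0 < d') (a : ℕ) : ((a + 1) * d' - 1) / d' = a :=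
  Nat.div_eq_of_lt_le (by rw [Nat.add_one_mul]; omega) (Nat.sub_one_lt (by positivity))

theorem Nat.succ_mul_sub_one_add_one_div {d' : ℕ} (hd' : 0 < d') (a : ℕ) :
    ((a + 1) * d' - 1 + 1) / d' = a + 1 := by
  rw [Nat.sub_add_cancel (Nat.one_le_iff_ne_zero.2 (by positivity)), Nat.mul_div_cancel _ hd']

/-- `(x^A y^B z^C)^{d'} (xyz)^{d'-1}` -/
noncomputable def inflate (d' A B C : ℕ) : Fin 3 →₀ ℕ :=
  expo ((A + 1) * d' - 1) ((B + 1) * d' - 1) ((C + 1) * d' - 1)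

def IsBaseSocle (d A B C : ℕ) : Prop :=
  ¬InBaseStair d A B C ∧ InBaseStair d (A + 1) B C ∧ InBaseStair d A (B + 1) C ∧
    InBaseStair d A B (C + 1)

theorem isSocleExponent_gens_iff {d d' : ℕ} (hd' : 0 < d') (s : Fin 3 →₀ ℕ) :
    IsSocleExponent (gens d d') s ↔ ∃ A B C, IsBaseSocle d A B C ∧ s = inflate d' A B C := by
  simp only [IsSocleExponent, IsBaseSocle, mem_upperClosure_gens_iff hd', Fin.isValue,
    Finsupp.coe_add, Pi.add_apply, Finsupp.single_apply, Fin.forall_fin_succ, ↓reduceIte,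
    zero_ne_one, add_zero, Fin.reduceEq, Fin.succ_ne_zero, Fin.succ_zero_eq_one,
    Fin.succ_one_eq_two, IsEmpty.forall_iff, and_true]
  constructor
  · rintro ⟨hns, hx, hy, hz⟩
    obtain ⟨hx', hs0⟩ := Nat.eq_succ_mul_sub_one_of_succ_div_ne (n := s 0) fun h => hns (h ▸ hx)
    obtain ⟨hy', hs1⟩ := Nat.eq_succ_mul_sub_one_of_succ_div_ne (n := s 1) fun h => hns (h ▸ hy)
    obtain ⟨hz', hs2⟩ := Nat.eq_succ_mul_sub_one_of_succ_div_ne (n := s 2) fun h => hns (h ▸ hz)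
    rw [hx'] at hx
    rw [hy'] at hy
    rw [hz'] at hz
    exact ⟨_, _, _, ⟨hns, hx, hy, hz⟩, expo_eq_iff.2 ⟨hs0, hs1, hs2⟩⟩
  · rintro ⟨A, B, C, hsoc, rfl⟩
    simpa only [inflate, expo_apply_zero, expo_apply_one, expo_apply_two,
      Nat.succ_mul_sub_one_div hd', Nat.succ_mul_sub_one_add_one_div hd'] using hsoc

theorem inflate_inj {d' : ℕ} (hd' : 0 < d') {A B C A' B' C' : ℕ} :
    inflate d' A B C = inflate d' A' B' C' ↔ A = A' ∧ B = B' ∧ C = C' := by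
  refine ⟨fun h => ?_, by rintro ⟨rfl, rfl, rfl⟩; rfl⟩
  have hdiv := fun i => congrArg (fun s : Fin 3 →₀ ℕ => s i / d') h
  simpa [inflate, Nat.succ_mul_sub_one_div hd'] using
    And.intro (hdiv 0) (And.intro (hdiv 1) (hdiv 2))

theorem degree_inflate {d' : ℕ} (hd' : 0 < d') (A B C : ℕ) :
    (inflate d' A B C).degree = (A + B + C + 3) * d' - 3 := by
  have hA : 0 < (A + 1) * d' := by positivity
  have hB : 0 < (B + 1) * d' := by positivity
  have hC : 0 < (C + 1) * d' := by positivity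
  have hsum : (A + B + C + 3) * d' = (A + 1) * d' + (B + 1) * d' + (C + 1) * d' := by ring
  rw [inflate, degree_expo, hsum]
  omega

theorem isBaseSocle_iff {d A B C : ℕ} (hd : 2 ≤ d) : IsBaseSocle d A B C ↔
    A + B = d - 2 ∧ C = d - 1 ∨ A = 1 ∧ B = d - 1 ∧ C = 0 ∨ 2 ≤ A ∧ A + B = d - 1 ∧ C = 0 := by
  unfold IsBaseSocle InBaseStair
  omega

noncomputable def socleExps (d d' : ℕ) : Finset (Fin 3 →₀ ℕ) :=
  (Finset.range (d - 1)).image (fun a => inflate d' a (d - 2 - a) (d - 1)) ∪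
    {inflate d' 1 (d - 1) 0} ∪
    (Finset.range (d - 2)).image (fun j => inflate d' (j + 2) (d - 3 - j) 0)

theorem mem_socleExps_iff {d d' : ℕ} (hd : 2 ≤ d) (hd' : 0 < d') (s : Fin 3 →₀ ℕ) :
    s ∈ socleExps d d' ↔ IsSocleExponent (gens d d') s := by
  simp only [isSocleExponent_gens_iff hd', isBaseSocle_iff hd, socleExps, Finset.mem_union,
    Finset.mem_image, Finset.mem_range, Finset.mem_singleton]
  constructor
  · rintro ((⟨a, ha, rfl⟩ | rfl) | ⟨j, hj, rfl⟩)
    · exact ⟨_, _, _, Or.inl ⟨by omega, rfl⟩, rfl⟩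
    · exact ⟨_, _, _, Or.inr (Or.inl ⟨rfl, rfl, rfl⟩), rfl⟩
    · exact ⟨_, _, _, Or.inr (Or.inr ⟨by omega, by omega, rfl⟩), rfl⟩
  · rintro ⟨A, B, C, ⟨hAB, rfl⟩ | ⟨rfl, rfl, rfl⟩ | ⟨hA, hAB, rfl⟩, rfl⟩
    · exact Or.inl (Or.inl ⟨A, by omega, by rw [show d - 2 - A = B by omega]⟩)
    · exact Or.inl (Or.inr rfl)
    · refine Or.inr ⟨A - 2, by omega, ?_⟩
      rw [show A - 2 + 2 = A by omega, show d - 3 - (A - 2) = B by omega]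

theorem Finset.card_filter_eq_ite_of_forall_eq {α : Type*} {F : Finset α} {f : α → ℕ} {e : ℕ}
    (h : ∀ x ∈ F, f x = e) (t : ℕ) :
    (F.filter (fun x => f x = t)).card = if t = e then F.card else 0 := by
  split_ifs with ht
  · rw [Finset.filter_true_of_mem fun x hx => (h x hx).trans ht.symm]
  · rw [Finset.filter_false_of_mem fun x hx hxt => ht (hxt.symm.trans (h x hx)),
      Finset.card_empty]

theorem card_filter_degree_socleExps {d d' : ℕ} (hd : 2 ≤ d) (hd' : 0 < d') (t : ℕ) :
    ((socleExps d d').filter (fun s => s.degree = t)).card =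
      (d - 2) * (if t = d * d' + 2 * d' - 3 then 1 else 0)
        + (if t = d * d' + 3 * d' - 3 then 1 else 0)
        + (d - 1) * (if t = 2 * d * d' - 3 then 1 else 0) := by
  set P₁ := (Finset.range (d - 1)).image (fun a => inflate d' a (d - 2 - a) (d - 1))
  set P₂ : Finset (Fin 3 →₀ ℕ) := {inflate d' 1 (d - 1) 0}
  set P₃ := (Finset.range (d - 2)).image (fun j => inflate d' (j + 2) (d - 3 - j) 0)
  have h₁₂ : Disjoint P₁ P₂ := by
    simp only [P₁, P₂, Finset.disjoint_left, Finset.mem_image, Finset.mem_range,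
      Finset.mem_singleton]
    rintro _ ⟨a, ha, rfl⟩ h
    rw [inflate_inj hd'] at h
    omega
  have h₁₂₃ : Disjoint (P₁ ∪ P₂) P₃ := by
    simp only [P₁, P₂, P₃, Finset.disjoint_left, Finset.mem_union, Finset.mem_image,
      Finset.mem_range, Finset.mem_singleton]
    rintro _ (⟨a, ha, rfl⟩ | rfl) ⟨j, hj, h⟩ <;> rw [inflate_inj hd'] at h <;> omega
  have hdeg₁ : ∀ s ∈ P₁, s.degree = 2 * d * d' - 3 := by
    simp only [P₁, Finset.mem_image, Finset.mem_range]
    rintro _ ⟨a, ha, rfl⟩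
    rw [degree_inflate hd', show a + (d - 2 - a) + (d - 1) + 3 = 2 * d by omega]
  have hdeg₂ : ∀ s ∈ P₂, s.degree = d * d' + 3 * d' - 3 := by
    simp only [P₂, Finset.mem_singleton]
    rintro _ rfl
    rw [degree_inflate hd', show 1 + (d - 1) + 0 + 3 = d + 3 by omega, add_mul]
  have hdeg₃ : ∀ s ∈ P₃, s.degree = d * d' + 2 * d' - 3 := by
    simp only [P₃, Finset.mem_image, Finset.mem_range]
    rintro _ ⟨j, hj, rfl⟩
    rw [degree_inflate hd', show j + 2 + (d - 3 - j) + 0 + 3 = d + 2 by omega, add_mul]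
  have hcard₁ : P₁.card = d - 1 := by
    rw [Finset.card_image_of_injective _ fun a b h => ((inflate_inj hd').1 h).1,
      Finset.card_range]
  have hcard₃ : P₃.card = d - 2 := by
    rw [Finset.card_image_of_injective _ fun a b h => by simpa using ((inflate_inj hd').1 h).1,
      Finset.card_range]
  rw [socleExps, Finset.filter_union, Finset.card_union_of_disjoint
    (Finset.disjoint_filter_filter h₁₂₃), Finset.filter_union, Finset.card_union_of_disjoint
    (Finset.disjoint_filter_filter h₁₂), Finset.card_filter_eq_ite_of_forall_eq hdeg₁,
    Finset.card_filter_eq_ite_of_forall_eq hdeg₂, Finset.card_filter_eq_ite_of_forall_eq hdeg₃,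
    hcard₁, hcard₃, Finset.card_singleton]
  split_ifs <;> omega

/-- For the ideal `I'` obtained from `(z(x,y)^{d−1}, x²(x,y)^{d−2}, y^d, z^d)` by the
reparametrization `x ↦ x^{d'}, y ↦ y^{d'}, z ↦ z^{d'}` (`d ≥ 2`, `d' ≥ 2`): `I'` is
`𝔪`-primary and
`dim_k Soc(R/I')_t = (d−2)·[t=dd'+2d'−3] + [t=dd'+3d'−3] + (d−1)·[t=2dd'−3]`. -/
theorem stmt2 {k : Type*} [Field k] (d d' : ℕ) (hd : 2 ≤ d) (hd' : 2 ≤ d')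
    (I' : Ideal (MvPolynomial (Fin 3) k))
    (hI' : I' = Ideal.span
      ({p | ∃ i ≤ d - 1, p = X 2 ^ d' * X 0 ^ (i * d') * X 1 ^ ((d - 1 - i) * d')} ∪
       {p | ∃ j ≤ d - 2, p = X 0 ^ ((2 + j) * d') * X 1 ^ ((d - 2 - j) * d')} ∪
       {X 1 ^ (d * d'), X 2 ^ (d * d')})) :
    (∃ N : ℕ, 1 ≤ N ∧ (mIdeal k) ^ N ≤ I')
    ∧ (∀ t : ℕ, socDimAt I' t =
        (d - 2) * (if t = d * d' + 2 * d' - 3 then 1 else 0)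
          + (if t = d * d' + 3 * d' - 3 then 1 else 0)
          + (d - 1) * (if t = 2 * d * d' - 3 then 1 else 0)) := by
  have hd'₀ : 0 < d' := by omega
  rw [span_eq_monomialIdeal_gens] at hI'
  subst hI'
  refine ⟨⟨3 * (d * d'), Nat.one_le_iff_ne_zero.2 (by positivity),
    mIdeal_pow_le_monomialIdeal fun _ => mem_upperClosure_gens_of_le_degree hd hd'₀⟩, fun t => ?_⟩
  rw [socDimAt_monomialIdeal _ t ((socleExps d d').filter fun s => s.degree = t)
    fun s => by rw [Finset.mem_filter, mem_socleExps_iff hd hd'₀],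
    card_filter_degree_socleExps hd hd'₀]
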